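/- arXiv:2310.05792 — 2 statements merged into one kernel-verified Lean document; each statement's English description precedes it below -/
import Mathlib

section
/- Let d ≥ 1, δ > 0, and let L : ℝ^d → ℝ be L̄-Lipschitz continuous (and bounded). Define L_δ(θ) := E_{w∼Unif(𝔹^d)}[L(θ + δ w)]. Then the gradient of L_δ is (d/δ)·L̄-Lipschitz; that is, for all θ₁, θ₂ ∈ ℝ^d, ‖∇L_δ(θ₁) − ∇L_δ(θ₂)‖ ≤ (d/δ) L̄ ‖θ₁ − θ₂‖. -/
open MeasureTheory Metric

/-- The uniform probability distribution on the closed unit ball of `ℝ^d`. -/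
noncomputable def unifBall (d : ℕ) : Measure (EuclideanSpace ℝ (Fin d)) :=
  (volume (closedBall (0 : EuclideanSpace ℝ (Fin d)) 1))⁻¹ •
    volume.restrict (closedBall (0 : EuclideanSpace ℝ (Fin d)) 1)

/-!
Differentiating under the integral sign (a Lipschitz `L` is differentiable almost everywhere by
Rademacher's theorem) shows that `∇L_δ θ` is the average of `∇L` over the ball `B(θ, δ)`. Two
such averages differ only through the lunes `B(θ₁, δ) \ B(θ₂, δ)` and `B(θ₂, δ) \ B(θ₁, δ)`, on
which `‖∇L‖ ≤ L̄`. With `t = ‖θ₁ - θ₂‖ ≤ 2δ`, each lune misses the ball of radius `δ - t / 2`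
around the midpoint, so its measure is at most a fraction `1 - (1 - t / (2δ))^d ≤ d t / (2δ)` of
the ball; for `t > 2δ` that bound exceeds `1` anyway.
-/

open Measure Module Set InnerProductSpace

section Lune

variable {E : Type*} [NormedAddCommGroup E] [NormedSpace ℝ E]

theorem closedBall_midpoint_subset_closedBall (x y : E) (r : ℝ) :
    closedBall (midpoint ℝ x y) (r - dist x y / 2) ⊆ closedBall x r := by
  intro z hz
  rw [mem_closedBall] at hz ⊢
  have hm : dist (midpoint ℝ x y) x = dist x y / 2 := by
    rw [dist_midpoint_left, Real.norm_ofNat]; ring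
  linarith [dist_triangle z (midpoint ℝ x y) x]

variable [MeasurableSpace E] [BorelSpace E] [FiniteDimensional ℝ E] (μ : Measure E)
  [μ.IsAddHaarMeasure]

theorem addHaar_real_closedBall_sdiff_closedBall_le (x y : E) {r : ℝ} (hr : 0 < r) :
    μ.real (closedBall x r \ closedBall y r) ≤
      finrank ℝ E * dist x y / (2 * r) * μ.real (closedBall x r) := by
  rcases eq_or_ne x y with rfl | hxy
  · simp
  have : Nontrivial E := ⟨⟨x, y, hxy⟩⟩
  obtain ⟨n, hn⟩ := Nat.exists_eq_succ_of_ne_zero (finrank_pos (R := ℝ) (M := E)).ne'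
  set t := dist x y
  have ht0 : 0 ≤ t := dist_nonneg
  set V := μ.real (closedBall (0 : E) 1)
  rw [addHaar_real_closedBall' μ x hr.le, hn]
  rcases le_or_gt t (2 * r) with ht | ht
  · set s := r - t / 2 with hs_def
    have hs : 0 ≤ s := by linarith
    have hsub : closedBall (midpoint ℝ x y) s ⊆ closedBall x r ∩ closedBall y r :=
      subset_inter (closedBall_midpoint_subset_closedBall x y r) (by
        simpa only [midpoint_comm, dist_comm] using closedBall_midpoint_subset_closedBall y x r)
    have hpow : r ^ (n + 1) - s ^ (n + 1) ≤ (r - s) * (n + 1 : ℕ) * r ^ n := by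
      have := abs_pow_sub_pow_le r s (n + 1)
      rwa [abs_of_nonneg (sub_nonneg.2 (pow_le_pow_left₀ hs (by linarith) _)),
        abs_of_nonneg (by linarith), abs_of_pos hr, abs_of_nonneg hs, max_eq_left (by linarith),
        Nat.add_sub_cancel] at this
    calc μ.real (closedBall x r \ closedBall y r)
        ≤ μ.real (closedBall x r \ closedBall (midpoint ℝ x y) s) :=
          measureReal_mono (sdiff_subset_sdiff_right (hsub.trans inter_subset_right))
            (measure_ne_top_of_subset sdiff_subset measure_closedBall_lt_top.ne)
      _ = (r ^ (n + 1) - s ^ (n + 1)) * V := by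
          rw [measureReal_sdiff (hsub.trans inter_subset_left) measurableSet_closedBall
              measure_closedBall_lt_top.ne,
            addHaar_real_closedBall' μ x hr.le, addHaar_real_closedBall' μ _ hs, hn, sub_mul]
      _ ≤ (r - s) * (n + 1 : ℕ) * r ^ n * V := by gcongr
      _ = (n + 1 : ℕ) * t / (2 * r) * (r ^ (n + 1) * V) := by
          field_simp; ring
  · calc μ.real (closedBall x r \ closedBall y r) ≤ μ.real (closedBall x r) :=
          measureReal_mono sdiff_subset measure_closedBall_lt_top.ne
      _ = r ^ (n + 1) * V := by rw [addHaar_real_closedBall' μ x hr.le, hn]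
      _ ≤ (n + 1 : ℕ) * t / (2 * r) * (r ^ (n + 1) * V) := by
          refine le_mul_of_one_le_left (by positivity) ?_
          rw [one_le_div₀ (by positivity)]
          push_cast
          nlinarith

end Lune

section Average

variable {α F : Type*} [MeasurableSpace α] [NormedAddCommGroup F] [NormedSpace ℝ F]
  {μ : Measure α} {f : α → F} {s t : Set α} {M : ℝ}

theorem norm_setAverage_sub_setAverage_le (hs : MeasurableSet s) (ht : MeasurableSet t)
    (hμs : μ s ≠ ⊤) (hμ : μ s = μ t) (hfs : IntegrableOn f s μ) (hft : IntegrableOn f t μ)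
    (hM : ∀ x, ‖f x‖ ≤ M) :
    ‖⨍ x in s, f x ∂μ - ⨍ x in t, f x ∂μ‖ ≤
      M * (μ.real (s \ t) + μ.real (t \ s)) / μ.real s := by
  have hsplit : ∫ x in s, f x ∂μ - ∫ x in t, f x ∂μ =
      ∫ x in s \ t, f x ∂μ - ∫ x in t \ s, f x ∂μ := by
    rw [← integral_inter_add_sdiff ht hfs, ← integral_inter_add_sdiff hs hft, inter_comm]
    abel
  have hbound : ∀ u, μ u ≠ ⊤ → ‖∫ x in u, f x ∂μ‖ ≤ M * μ.real u := fun u hu =>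
    norm_setIntegral_le_of_norm_le_const hu.lt_top fun x _ => hM x
  have hμt : μ t ≠ ⊤ := hμ ▸ hμs
  have hμt_real : μ.real t = μ.real s := by rw [measureReal_def, measureReal_def, hμ]
  rw [setAverage_eq, setAverage_eq, hμt_real, ← smul_sub,
    hsplit, norm_smul, Real.norm_of_nonneg (by positivity), div_eq_inv_mul]
  gcongr
  calc ‖∫ x in s \ t, f x ∂μ - ∫ x in t \ s, f x ∂μ‖
      ≤ ‖∫ x in s \ t, f x ∂μ‖ + ‖∫ x in t \ s, f x ∂μ‖ := norm_sub_le _ _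
    _ ≤ M * μ.real (s \ t) + M * μ.real (t \ s) :=
        add_le_add (hbound _ (measure_ne_top_of_subset sdiff_subset hμs))
          (hbound _ (measure_ne_top_of_subset sdiff_subset hμt))
    _ = M * (μ.real (s \ t) + μ.real (t \ s)) := (mul_add _ _ _).symm

end Average

section BallAverage

variable {E F : Type*} [NormedAddCommGroup E] [NormedSpace ℝ E] [MeasurableSpace E] [BorelSpace E]
  [FiniteDimensional ℝ E] (μ : Measure E) [μ.IsAddHaarMeasure]
  [NormedAddCommGroup F] [NormedSpace ℝ F]

theorem norm_setAverage_closedBall_sub_le {f : E → F} {M : ℝ} (hf : AEStronglyMeasurable f μ)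
    (hM : ∀ x, ‖f x‖ ≤ M) (x y : E) {r : ℝ} (hr : 0 < r) :
    ‖⨍ z in closedBall x r, f z ∂μ - ⨍ z in closedBall y r, f z ∂μ‖ ≤
      finrank ℝ E / r * M * dist x y := by
  have hM0 : 0 ≤ M := (norm_nonneg _).trans (hM x)
  have hint : ∀ z, IntegrableOn f (closedBall z r) μ := fun z =>
    Measure.integrableOn_of_bounded measure_closedBall_lt_top.ne hf (.of_forall hM)
  have hvol : μ (closedBall x r) = μ (closedBall y r) := by
    rw [addHaar_closedBall' μ x hr.le, addHaar_closedBall' μ y hr.le]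
  have hvol_real : μ.real (closedBall y r) = μ.real (closedBall x r) := by
    rw [measureReal_def, measureReal_def, hvol]
  have hpos : 0 < μ.real (closedBall x r) :=
    ENNReal.toReal_pos (measure_closedBall_pos μ x hr).ne' measure_closedBall_lt_top.ne
  have hxy := addHaar_real_closedBall_sdiff_closedBall_le μ x y hr
  have hyx := addHaar_real_closedBall_sdiff_closedBall_le μ y x hr
  rw [hvol_real, dist_comm y x] at hyx
  calc _ ≤ M * (μ.real (closedBall x r \ closedBall y r) + μ.real (closedBall y r \ closedBall x r))
        / μ.real (closedBall x r) :=
        norm_setAverage_sub_setAverage_le measurableSet_closedBall measurableSet_closedBall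
          measure_closedBall_lt_top.ne hvol (hint x) (hint y) hM
    _ ≤ M * (2 * (finrank ℝ E * dist x y / (2 * r) * μ.real (closedBall x r)))
        / μ.real (closedBall x r) := by gcongr; linarith
    _ = finrank ℝ E / r * M * dist x y := by field_simp

end BallAverage

section Gradient

variable {F : Type*} [NormedAddCommGroup F] [InnerProductSpace ℝ F] [CompleteSpace F]

theorem measurable_gradient [MeasurableSpace F] [BorelSpace F] (f : F → ℝ) :
    Measurable (gradient f) :=
  (toDual ℝ F).symm.continuous.measurable.comp (measurable_fderiv ℝ f)

theorem norm_gradient_le_of_lipschitz {f : F → ℝ} {C : NNReal} (hf : LipschitzWith C f) (x : F) :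
    ‖gradient f x‖ ≤ C := by
  rw [gradient, LinearIsometryEquiv.norm_map]
  exact norm_fderiv_le_of_lipschitz ℝ hf

end Gradient

theorem LipschitzWith.hasFDerivAt_integral_comp_add {α E F : Type*} [MeasurableSpace α]
    {μ : Measure α} [IsFiniteMeasure μ] [NormedAddCommGroup E] [NormedSpace ℝ E]
    [FiniteDimensional ℝ E] [MeasurableSpace E] [BorelSpace E]
    [NormedAddCommGroup F] [NormedSpace ℝ F] [FiniteDimensional ℝ F]
    {L : E → F} {K : NNReal} (hL : LipschitzWith K L) {g : α → E} (hg : AEStronglyMeasurable g μ)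
    {θ : E} (hint : Integrable (fun a => L (θ + g a)) μ)
    (hdiff : ∀ᵐ a ∂μ, DifferentiableAt ℝ L (θ + g a)) :
    HasFDerivAt (fun θ => ∫ a, L (θ + g a) ∂μ) (∫ a, fderiv ℝ L (θ + g a) ∂μ) θ := by
  have hF_meas (x : E) : AEStronglyMeasurable (fun a => L (x + g a)) μ :=
    hL.continuous.comp_aestronglyMeasurable (hg.const_add x)
  have hF'_meas : AEStronglyMeasurable (fun a => fderiv ℝ L (θ + g a)) μ :=
    ((measurable_fderiv ℝ L).comp_aemeasurable (hg.const_add θ).aemeasurable).aestronglyMeasurable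
  have hlip (a : α) : LipschitzWith K fun x => L (x + g a) :=
    LipschitzWith.of_dist_le_mul fun x y => by simpa using hL.dist_le_mul (x + g a) (y + g a)
  have hderiv : ∀ᵐ a ∂μ, HasFDerivAt (fun x => L (x + g a)) (fderiv ℝ L (θ + g a)) θ :=
    hdiff.mono fun a ha => (hasFDerivAt_comp_add_right (g a)).2 ha.hasFDerivAt
  exact (hasFDerivAt_integral_of_dominated_loc_of_lip Filter.univ_mem (.of_forall hF_meas) hint
    hF'_meas (.of_forall fun a => by simpa using (hlip a).lipschitzOnWith (s := univ))
    (integrable_const (K : ℝ)) hderiv).2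

section UnifBall

variable {d : ℕ}

local notation "E" => EuclideanSpace ℝ (Fin d)

instance isProbabilityMeasure_unifBall : IsProbabilityMeasure (unifBall d) :=
  ⟨by simp [unifBall, ENNReal.inv_mul_cancel (measure_closedBall_pos _ _ one_pos).ne'
      measure_closedBall_lt_top.ne]⟩

theorem unifBall_absolutelyContinuous : unifBall d ≪ volume :=
  (AbsolutelyContinuous.smul_left restrict_le_self.absolutelyContinuous _)

theorem integral_unifBall_comp_add_smul {F : Type*} [NormedAddCommGroup F] [NormedSpace ℝ F]
    (f : E → F) (θ : E) {δ : ℝ} (hδ : 0 < δ) :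
    ∫ w, f (θ + δ • w) ∂(unifBall d) = ⨍ x in closedBall θ δ, f x := by
  have hscale := setIntegral_comp_smul_of_pos volume (fun y => f (θ + y)) (closedBall (0 : E) 1) hδ
  rw [finrank_euclideanSpace_fin, _root_.smul_closedBall _ _ zero_le_one, smul_zero,
    Real.norm_of_nonneg hδ.le, mul_one] at hscale
  have htrans := (measurePreserving_add_left volume θ).setIntegral_preimage_emb
    (MeasurableEquiv.addLeft θ).measurableEmbedding f (closedBall θ δ)
  rw [preimage_add_left_closedBall, neg_add_cancel] at htrans
  rw [unifBall, integral_smul_measure, hscale, htrans, setAverage_eq,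
    addHaar_real_closedBall' _ _ hδ.le, finrank_euclideanSpace_fin, smul_smul, ENNReal.toReal_inv,
    ← measureReal_def, mul_inv, mul_comm]

theorem LipschitzWith.hasGradientAt_integral_unifBall {L : E → ℝ} {K : NNReal}
    (hL : LipschitzWith K L) {δ : ℝ} (hδ : 0 < δ) (θ : E) :
    HasGradientAt (fun θ => ∫ w, L (θ + δ • w) ∂(unifBall d))
      (⨍ x in closedBall θ δ, gradient L x) θ := by
  have hdiff : ∀ᵐ w ∂(unifBall d), DifferentiableAt ℝ L (θ + δ • w) :=
    unifBall_absolutelyContinuous.ae_le <|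
      ((quasiMeasurePreserving_add_left volume θ).comp
        (quasiMeasurePreserving_smul volume hδ.ne')).ae hL.ae_differentiableAt
  have hint : Integrable (fun w => L (θ + δ • w)) (unifBall d) :=
    (((hL.continuous.comp (continuous_const.add (continuous_const_smul δ))).continuousOn
      |>.integrableOn_compact (isCompact_closedBall 0 1)).smul_measure
      (ENNReal.inv_ne_top.2 (measure_closedBall_pos _ _ one_pos).ne'))
  have hderiv := hL.hasFDerivAt_integral_comp_add (continuous_const_smul δ).aestronglyMeasurable
    hint hdiff
  have hdual := (toDual ℝ E).toLinearIsometry.integral_comp_comm (μ := unifBall d)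
    fun w => gradient L (θ + δ • w)
  simp only [LinearIsometryEquiv.coe_toLinearIsometry, toDual_gradient] at hdual
  rwa [hasGradientAt_iff_hasFDerivAt, ← integral_unifBall_comp_add_smul _ θ hδ, ← hdual]

end UnifBall

theorem stmt1_general (d : ℕ) (δ : ℝ) (hδ : 0 < δ)
    (L : EuclideanSpace ℝ (Fin d) → ℝ) (Lbar : ℝ)
    (hLip : ∀ x y : EuclideanSpace ℝ (Fin d), |L x - L y| ≤ Lbar * ‖x - y‖) :
    ∀ θ₁ θ₂ : EuclideanSpace ℝ (Fin d),
      ‖gradient (fun θ : EuclideanSpace ℝ (Fin d) => ∫ w, L (θ + δ • w) ∂(unifBall d)) θ₁ -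
        gradient (fun θ : EuclideanSpace ℝ (Fin d) => ∫ w, L (θ + δ • w) ∂(unifBall d)) θ₂‖ ≤
      ((d : ℝ) / δ) * Lbar * ‖θ₁ - θ₂‖ := by
  intro θ₁ θ₂
  rcases eq_or_ne θ₁ θ₂ with rfl | hne
  · simp
  have hLbar : 0 ≤ Lbar := nonneg_of_mul_nonneg_left ((abs_nonneg _).trans (hLip θ₁ θ₂))
    (norm_pos_iff.2 (sub_ne_zero.2 hne))
  have hL : LipschitzWith (Real.toNNReal Lbar) L :=
    LipschitzWith.of_dist_le' fun x y => by rw [Real.dist_eq, dist_eq_norm]; exact hLip x y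
  have hgrad_bound (x : EuclideanSpace ℝ (Fin d)) : ‖gradient L x‖ ≤ Lbar :=
    (norm_gradient_le_of_lipschitz hL x).trans_eq (Real.coe_toNNReal _ hLbar)
  rw [(hL.hasGradientAt_integral_unifBall hδ θ₁).gradient,
    (hL.hasGradientAt_integral_unifBall hδ θ₂).gradient]
  simpa only [finrank_euclideanSpace_fin, dist_eq_norm] using
    norm_setAverage_closedBall_sub_le volume (measurable_gradient L).aestronglyMeasurable
      hgrad_bound θ₁ θ₂ hδ

/-- if `L` is `L̄`-Lipschitz (and bounded), then the gradient of the
ball-smoothed function `L_δ` is `(d/δ)·L̄`-Lipschitz. -/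
theorem stmt1 (d : ℕ) (hd : 1 ≤ d) (δ : ℝ) (hδ : 0 < δ)
    (L : EuclideanSpace ℝ (Fin d) → ℝ) (Lbar : ℝ)
    (hLip : ∀ x y : EuclideanSpace ℝ (Fin d), |L x - L y| ≤ Lbar * ‖x - y‖)
    (hLbdd : ∃ C : ℝ, ∀ θ, |L θ| ≤ C) :
    ∀ θ₁ θ₂ : EuclideanSpace ℝ (Fin d),
      ‖gradient (fun θ : EuclideanSpace ℝ (Fin d) => ∫ w, L (θ + δ • w) ∂(unifBall d)) θ₁ -
        gradient (fun θ : EuclideanSpace ℝ (Fin d) => ∫ w, L (θ + δ • w) ∂(unifBall d)) θ₂‖ ≤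
      ((d : ℝ) / δ) * Lbar * ‖θ₁ - θ₂‖ :=
  stmt1_general d δ hδ L Lbar hLip
end

section
/- Let Z be a measurable space, ℓ : ℝ^d × Z → ℝ a measurable loss with |ℓ(θ; z)| ≤ G for all θ ∈ ℝ^d and z ∈ Z, and (Π_θ)_{θ∈ℝ^d} a family of probability measures on Z. Define the performative risk L(θ) := E_{Z∼Π_θ}[ℓ(θ; Z)] and assume L is differentiable with L-Lipschitz gradient. Assume further that the distribution map is Lipschitz in total variation: d_TV(Π_{θ₁}, Π_{θ₂}) ≤ L₁‖θ₁ − θ₂‖ for all θ₁, θ₂ ∈ ℝ^d. Then for all θ₁, θ₂ ∈ ℝ^d, |E_{Z∼Π_{θ₂}}[ℓ(θ₁; Z) − ℓ(θ₂; Z)]| ≤ 2(G L₁ + √(L G))‖θ₁ − θ₂‖ + (L/2)‖θ₁ − θ₂‖². -/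
/-!
Split `E_{Π_{θ₂}}[ℓ(θ₁; ·) - ℓ(θ₂; ·)]` as `(E_{Π_{θ₂}} - E_{Π_{θ₁}})[ℓ(θ₁; ·)] + (L(θ₁) - L(θ₂))`.
The layer-cake formula applied to `ℓ(θ₁; ·) + G ∈ [0, 2G]` bounds the first term by
`2G · d_TV(Π_{θ₁}, Π_{θ₂})`. The second term is controlled by the descent lemma
`|L(θ₁) - L(θ₂) - ⟪∇L(θ₂), θ₁ - θ₂⟫| ≤ (L/2)‖θ₁ - θ₂‖²` and the bound `‖∇L‖ ≤ 2√(LG)`: a function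
with values in `[-G, G]` cannot drop by more than `2G`, whereas a step of length `1/L` against
the gradient makes it drop by `‖∇L‖² / (2L)`.
-/

open MeasureTheory

noncomputable def dTV {Z : Type*} [MeasurableSpace Z] (μ ν : Measure Z) : ℝ :=
  ⨆ A : {A : Set Z // MeasurableSet A}, ((μ A.1).toReal - (ν A.1).toReal)

open Set

section TotalVariation

variable {Z : Type*} [MeasurableSpace Z]

theorem measureReal_sub_measureReal_le_dTV (μ ν : Measure Z) [IsFiniteMeasure μ] {A : Set Z}
    (hA : MeasurableSet A) : μ.real A - ν.real A ≤ dTV μ ν := by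
  refine le_ciSup (f := fun B : {B : Set Z // MeasurableSet B} => μ.real B - ν.real B)
    ⟨μ.real univ, ?_⟩ ⟨A, hA⟩
  rintro _ ⟨B, rfl⟩
  linarith [measureReal_mono (μ := μ) (subset_univ B.1), measureReal_nonneg (μ := ν) (s := B.1)]

theorem dTV_le_dTV_swap (μ ν : Measure Z) [IsProbabilityMeasure μ] [IsProbabilityMeasure ν] :
    dTV μ ν ≤ dTV ν μ := by
  have : Nonempty {A : Set Z // MeasurableSet A} := ⟨⟨∅, .empty⟩⟩
  refine ciSup_le fun A => ?_
  have h := measureReal_sub_measureReal_le_dTV ν μ A.2.compl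
  rw [probReal_compl_eq_one_sub A.2, probReal_compl_eq_one_sub A.2] at h
  change μ.real A - ν.real A ≤ dTV ν μ
  linarith

theorem dTV_comm (μ ν : Measure Z) [IsProbabilityMeasure μ] [IsProbabilityMeasure ν] :
    dTV μ ν = dTV ν μ :=
  (dTV_le_dTV_swap μ ν).antisymm (dTV_le_dTV_swap ν μ)

theorem integral_sub_integral_le_mul_dTV (μ ν : Measure Z) [IsFiniteMeasure μ] [IsFiniteMeasure ν]
    {g : Z → ℝ} (hg : Measurable g) {C : ℝ} (hC : 0 ≤ C) (hg_nonneg : ∀ z, 0 ≤ g z)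
    (hg_le : ∀ z, g z ≤ C) : ∫ z, g z ∂μ - ∫ z, g z ∂ν ≤ C * dTV μ ν := by
  have layercake : ∀ (κ : Measure Z) [IsFiniteMeasure κ],
      ∫ z, g z ∂κ = ∫ t in Ioc 0 C, κ.real {z | t ≤ g z} := fun κ _ =>
    (Integrable.of_bound hg.aestronglyMeasurable C (ae_of_all _ fun z => by
      simpa [abs_of_nonneg (hg_nonneg z)] using hg_le z)).integral_eq_integral_Ioc_meas_le
      (ae_of_all _ hg_nonneg) (ae_of_all _ hg_le)
  have tail_integrable : ∀ (κ : Measure Z) [IsFiniteMeasure κ],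
      IntegrableOn (fun t => κ.real {z | t ≤ g z}) (Ioc 0 C) := fun κ _ =>
    have anti : Antitone fun t => κ.real {z | t ≤ g z} := fun _ _ hst =>
      measureReal_mono fun _ hz => hst.trans hz
    ((anti.antitoneOn _).integrableOn_isCompact isCompact_Icc).mono_set Ioc_subset_Icc_self
  rw [layercake μ, layercake ν, ← integral_sub (tail_integrable μ) (tail_integrable ν)]
  calc ∫ t in Ioc 0 C, (μ.real {z | t ≤ g z} - ν.real {z | t ≤ g z})
      ≤ ∫ _ in Ioc 0 C, dTV μ ν :=
        setIntegral_mono_on ((tail_integrable μ).sub (tail_integrable ν))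
          (integrableOn_const measure_Ioc_lt_top.ne) measurableSet_Ioc
          fun t _ => measureReal_sub_measureReal_le_dTV μ ν (hg measurableSet_Ici)
    _ = C * dTV μ ν := by
        rw [setIntegral_const, Real.volume_real_Ioc_of_le hC, smul_eq_mul, sub_zero]

theorem integral_sub_integral_le_two_mul_dTV (μ ν : Measure Z) [IsProbabilityMeasure μ]
    [IsProbabilityMeasure ν] {f : Z → ℝ} (hf : Measurable f) {G : ℝ} (hfG : ∀ z, |f z| ≤ G) :
    ∫ z, f z ∂μ - ∫ z, f z ∂ν ≤ 2 * G * dTV μ ν := by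
  have hG : 0 ≤ G := (abs_nonneg _).trans (hfG (nonempty_of_isProbabilityMeasure μ).some)
  have shift : ∀ (κ : Measure Z) [IsProbabilityMeasure κ],
      ∫ z, (f z + G) ∂κ = ∫ z, f z ∂κ + G := fun κ _ => by
    rw [integral_add (.of_bound hf.aestronglyMeasurable G (ae_of_all _ hfG)) (integrable_const G),
      integral_const, probReal_univ, one_smul]
  have := integral_sub_integral_le_mul_dTV μ ν (hf.add_const G) (C := 2 * G) (by linarith)
    (fun z => by linarith [neg_abs_le (f z), hfG z])
    (fun z => by linarith [le_abs_self (f z), hfG z])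
  rw [shift μ, shift ν] at this
  linarith

theorem abs_integral_sub_integral_le_two_mul_dTV (μ ν : Measure Z) [IsProbabilityMeasure μ]
    [IsProbabilityMeasure ν] {f : Z → ℝ} (hf : Measurable f) {G : ℝ} (hfG : ∀ z, |f z| ≤ G) :
    |∫ z, f z ∂μ - ∫ z, f z ∂ν| ≤ 2 * G * dTV μ ν := by
  refine abs_sub_le_iff.mpr ⟨integral_sub_integral_le_two_mul_dTV μ ν hf hfG, ?_⟩
  rw [dTV_comm]
  exact integral_sub_integral_le_two_mul_dTV ν μ hf hfG

end TotalVariation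

section LipschitzGradient

variable {E : Type*} [NormedAddCommGroup E] [InnerProductSpace ℝ E] [CompleteSpace E]
  {F : E → ℝ} {L : ℝ}

theorem abs_sub_sub_inner_gradient_le (hF : Differentiable ℝ F)
    (hLip : ∀ a b, ‖gradient F a - gradient F b‖ ≤ L * ‖a - b‖) (x v : E) :
    |F (x + v) - F x - inner ℝ (gradient F x) v| ≤ L / 2 * ‖v‖ ^ 2 := by
  set φ : ℝ → ℝ := fun t => F (x + t • v) - F x - t * inner ℝ (gradient F x) v
  have hφ : ∀ t, HasDerivAt φ (inner ℝ (gradient F (x + t • v) - gradient F x) v) t := by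
    intro t
    have hline : HasDerivAt (fun s : ℝ => x + s • v) v t := by
      simpa using ((hasDerivAt_id t).smul_const v).const_add x
    have := (((hF _).hasGradientAt.hasFDerivAt.comp_hasDerivAt t hline).sub_const (F x)).sub
      ((hasDerivAt_id t).mul_const (inner ℝ (gradient F x) v))
    refine this.congr_deriv ?_
    rw [inner_sub_left, InnerProductSpace.toDual_apply_apply, one_mul]
  have hbound : ∀ t ∈ Ico (0 : ℝ) 1,
      ‖inner ℝ (gradient F (x + t • v) - gradient F x) v‖ ≤ L * ‖v‖ ^ 2 * t := by
    rintro t ⟨ht, -⟩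
    calc ‖inner ℝ (gradient F (x + t • v) - gradient F x) v‖
        ≤ ‖gradient F (x + t • v) - gradient F x‖ * ‖v‖ := norm_inner_le_norm _ _
      _ ≤ L * ‖t • v‖ * ‖v‖ := by
          gcongr
          simpa using hLip (x + t • v) x
      _ = L * ‖v‖ ^ 2 * t := by
          rw [norm_smul, Real.norm_of_nonneg ht]
          ring
  have hB : ∀ t : ℝ, HasDerivAt (fun s => L / 2 * ‖v‖ ^ 2 * s ^ 2) (L * ‖v‖ ^ 2 * t) t := by
    intro t
    refine ((hasDerivAt_pow 2 t).const_mul (L / 2 * ‖v‖ ^ 2)).congr_deriv ?_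
    norm_num
    ring
  have := image_norm_le_of_norm_deriv_right_le_deriv_boundary
    (fun t _ => (hφ t).continuousAt.continuousWithinAt) (fun t _ => (hφ t).hasDerivWithinAt)
    (by simp [φ]) hB hbound (right_mem_Icc.mpr zero_le_one)
  simpa [φ] using this

theorem norm_gradient_le_two_mul_sqrt (hF : Differentiable ℝ F)
    (hLip : ∀ a b, ‖gradient F a - gradient F b‖ ≤ L * ‖a - b‖) {G : ℝ} (hFG : ∀ y, |F y| ≤ G)
    (x : E) : ‖gradient F x‖ ≤ 2 * √(L * G) := by
  set g := gradient F x
  -- Along the ray `x + t • g`, the descent bound and `|F| ≤ G` give a quadratic in `t` that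
  -- stays nonnegative, so its discriminant is nonpositive.
  have hquad : ∀ t : ℝ, 0 ≤ L / 2 * ‖g‖ ^ 2 * (t * t) + ‖g‖ ^ 2 * t + 2 * G := by
    intro t
    have hdesc := (abs_le.mp (abs_sub_sub_inner_gradient_le hF hLip x (t • g))).2
    rw [real_inner_smul_right, real_inner_self_eq_norm_sq, norm_smul, Real.norm_eq_abs, mul_pow,
      sq_abs] at hdesc
    linarith [abs_le.mp (hFG x), abs_le.mp (hFG (x + t • g))]
  have hdiscrim := discrim_le_zero hquad
  rw [discrim] at hdiscrim
  rcases (norm_nonneg g).eq_or_lt with hg | hg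
  · rw [← hg]; positivity
  have : ‖g‖ ^ 2 ≤ 2 ^ 2 * (L * G) := by nlinarith [pow_pos hg 2]
  calc ‖g‖ ≤ √(2 ^ 2 * (L * G)) := Real.le_sqrt_of_sq_le this
    _ = 2 * √(L * G) := by rw [Real.sqrt_mul (by norm_num), Real.sqrt_sq (by norm_num)]

theorem abs_sub_le_of_lipschitz_gradient_of_abs_le (hF : Differentiable ℝ F)
    (hLip : ∀ a b, ‖gradient F a - gradient F b‖ ≤ L * ‖a - b‖) {G : ℝ} (hFG : ∀ y, |F y| ≤ G)
    (x y : E) : |F y - F x| ≤ 2 * √(L * G) * ‖y - x‖ + L / 2 * ‖y - x‖ ^ 2 := by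
  have hdesc := abs_sub_sub_inner_gradient_le hF hLip x (y - x)
  rw [add_sub_cancel] at hdesc
  calc |F y - F x| = |(F y - F x - inner ℝ (gradient F x) (y - x))
        + inner ℝ (gradient F x) (y - x)| := by rw [sub_add_cancel]
    _ ≤ |F y - F x - inner ℝ (gradient F x) (y - x)|
        + |inner ℝ (gradient F x) (y - x)| := abs_add_le _ _
    _ ≤ L / 2 * ‖y - x‖ ^ 2 + ‖gradient F x‖ * ‖y - x‖ := by
        gcongr; exact abs_real_inner_le_norm _ _
    _ ≤ 2 * √(L * G) * ‖y - x‖ + L / 2 * ‖y - x‖ ^ 2 := by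
        linarith [mul_le_mul_of_nonneg_right (norm_gradient_le_two_mul_sqrt hF hLip hFG x)
          (norm_nonneg (y - x))]

end LipschitzGradient

/-- Lipschitz continuity of the decoupled risk: under boundedness of the loss,
smoothness of the performative risk and total-variation Lipschitzness of the
distribution map, `|E_{Z∼Π_{θ₂}}[ℓ(θ₁;Z) − ℓ(θ₂;Z)]| ≤ 2(GL₁+√(LG))‖θ₁−θ₂‖ + (L/2)‖θ₁−θ₂‖²`. -/
theorem stmt6 (d : ℕ) {Z : Type*} [MeasurableSpace Z]
    (ℓ : EuclideanSpace ℝ (Fin d) → Z → ℝ)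
    (hℓmeas : Measurable (Function.uncurry ℓ))
    (G : ℝ) (hℓbdd : ∀ θ z, |ℓ θ z| ≤ G)
    (P : EuclideanSpace ℝ (Fin d) → Measure Z)
    (hP : ∀ θ, IsProbabilityMeasure (P θ))
    (L : ℝ)
    (hdiff : Differentiable ℝ (fun θ : EuclideanSpace ℝ (Fin d) => ∫ z, ℓ θ z ∂(P θ)))
    (hgradLip : ∀ θ θ' : EuclideanSpace ℝ (Fin d),
      ‖gradient (fun θ'' : EuclideanSpace ℝ (Fin d) => ∫ z, ℓ θ'' z ∂(P θ'')) θ -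
        gradient (fun θ'' : EuclideanSpace ℝ (Fin d) => ∫ z, ℓ θ'' z ∂(P θ'')) θ'‖ ≤
          L * ‖θ - θ'‖)
    (L₁ : ℝ)
    (hTV : ∀ θ₁ θ₂ : EuclideanSpace ℝ (Fin d), dTV (P θ₁) (P θ₂) ≤ L₁ * ‖θ₁ - θ₂‖) :
    ∀ θ₁ θ₂ : EuclideanSpace ℝ (Fin d),
      |∫ z, (ℓ θ₁ z - ℓ θ₂ z) ∂(P θ₂)| ≤
        2 * (G * L₁ + Real.sqrt (L * G)) * ‖θ₁ - θ₂‖ + (L / 2) * ‖θ₁ - θ₂‖ ^ 2 := by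
  intro θ₁ θ₂
  have hℓ : ∀ θ, Measurable (ℓ θ) := fun θ => hℓmeas.comp measurable_prodMk_left
  have hint : ∀ θ θ', Integrable (ℓ θ) (P θ') := fun θ θ' =>
    .of_bound (hℓ θ).aestronglyMeasurable G (ae_of_all _ (hℓbdd θ))
  have hG : 0 ≤ G :=
    (abs_nonneg _).trans (hℓbdd θ₁ (nonempty_of_isProbabilityMeasure (P θ₁)).some)
  have hsplit : ∫ z, (ℓ θ₁ z - ℓ θ₂ z) ∂(P θ₂) =
      (∫ z, ℓ θ₁ z ∂(P θ₂) - ∫ z, ℓ θ₁ z ∂(P θ₁)) +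
        (∫ z, ℓ θ₁ z ∂(P θ₁) - ∫ z, ℓ θ₂ z ∂(P θ₂)) := by
    rw [integral_sub (hint θ₁ θ₂) (hint θ₂ θ₂)]
    ring
  have hshift : |∫ z, ℓ θ₁ z ∂(P θ₂) - ∫ z, ℓ θ₁ z ∂(P θ₁)| ≤ 2 * G * (L₁ * ‖θ₁ - θ₂‖) := by
    rw [norm_sub_rev]
    exact (abs_integral_sub_integral_le_two_mul_dTV _ _ (hℓ θ₁) (hℓbdd θ₁)).trans
      (by gcongr; exact hTV θ₂ θ₁)
  have hrisk_bdd : ∀ θ, |∫ z, ℓ θ z ∂(P θ)| ≤ G := fun θ => by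
    simpa using norm_integral_le_of_norm_le_const (μ := P θ) (f := ℓ θ) (ae_of_all _ (hℓbdd θ))
  have hrisk := abs_sub_le_of_lipschitz_gradient_of_abs_le hdiff hgradLip hrisk_bdd θ₂ θ₁
  rw [hsplit]
  linarith [abs_add_le (∫ z, ℓ θ₁ z ∂(P θ₂) - ∫ z, ℓ θ₁ z ∂(P θ₁))
    (∫ z, ℓ θ₁ z ∂(P θ₁) - ∫ z, ℓ θ₂ z ∂(P θ₂))]
end
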